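/- If B is a strong subformula of A = C → D, then B is a proper subformula of a prime factor of C or of a prime factor of D. -/
import Mathlib


/-- Propositional formulas: atoms, ⊥, implication, conjunction. -/
inductive Formula : Type where
  | atom : Nat → Formula
  | bot  : Formula
  | imp  : Formula → Formula → Formula
  | conj : Formula → Formula → Formula
deriving DecidableEq

/-- A formula is prime if it is not a conjunction. -/
def Formula.IsPrime : Formula → Prop
  | .conj _ _ => False
  | _ => True

/-- Atomic formulas (atoms and ⊥). -/
def Formula.IsAtomic : Formula → Prop
  | .atom _ => True
  | .bot => True
  | _ => False

/-- Subformula relation. -/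
inductive Subformula : Formula → Formula → Prop where
  | refl (A : Formula) : Subformula A A
  | impL : Subformula A B → Subformula A (Formula.imp B C)
  | impR : Subformula A C → Subformula A (Formula.imp B C)
  | conjL : Subformula A B → Subformula A (Formula.conj B C)
  | conjR : Subformula A C → Subformula A (Formula.conj B C)

/-- Proper subformula: subformula and not equal. -/
def ProperSub (A B : Formula) : Prop := Subformula A B ∧ A ≠ B

/-- B is a strong subformula of A: a proper subformula of some prime
proper subformula of A. -/
def StrongSub (B A : Formula) : Prop :=
  ∃ P, Formula.IsPrime P ∧ ProperSub P A ∧ ProperSub B P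

/-- `ConjList A l` : A is the conjunction of the (nonempty) list of formulas l. -/
inductive ConjList : Formula → List Formula → Prop where
  | single (A : Formula) : ConjList A [A]
  | conj : ConjList A l → ConjList B m → ConjList (Formula.conj A B) (l ++ m)

/-- P is a prime factor of A: A is a conjunction of prime formulas among which P. -/
def PrimeFactor (P A : Formula) : Prop :=
  ∃ l, ConjList A l ∧ (∀ Q ∈ l, Formula.IsPrime Q) ∧ P ∈ l

/-- Number of symbols of a formula. -/
def Formula.size : Formula → Nat
  | .atom _ => 1
  | .bot => 1
  | .imp A B => A.size + B.size + 1
  | .conj A B => A.size + B.size + 1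

/-- The canonical list of prime factors of a formula. -/
def primeFactors : Formula → List Formula
  | .conj A B => primeFactors A ++ primeFactors B
  | A => [A]
theorem Subformula.trans {A B C : Formula} (h1 : Subformula A B)
    (h2 : Subformula B C) : Subformula A C := by
  induction h2 with
  | refl => exact h1
  | impL _ ih => exact Subformula.impL ih
  | impR _ ih => exact Subformula.impR ih
  | conjL _ ih => exact Subformula.conjL ih
  | conjR _ ih => exact Subformula.conjR ih

theorem Subformula.size_lt {A B : Formula} (h : Subformula A B) :
    A = B ∨ A.size < B.size := by
  induction h with
  | refl => exact Or.inl rfl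
  | impL _ ih | impR _ ih | conjL _ ih | conjR _ ih =>
    right
    rcases ih with rfl | hlt <;> simp [Formula.size] <;> omega

theorem exists_prime_decomp (E : Formula) :
    ∃ l, ConjList E l ∧ ∀ Q ∈ l, Formula.IsPrime Q := by
  induction E with
  | conj E1 E2 ih1 ih2 =>
    obtain ⟨l, hl, hal⟩ := ih1
    obtain ⟨m, hm, ham⟩ := ih2
    exact ⟨l ++ m, .conj hl hm, by
      intro Q hQ; rcases List.mem_append.mp hQ with h | h
      exacts [hal Q h, ham Q h]⟩
  | atom n => exact ⟨[.atom n], .single _, by simp [Formula.IsPrime]⟩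
  | bot => exact ⟨[.bot], .single _, by simp [Formula.IsPrime]⟩
  | imp A Bb _ _ => exact ⟨[.imp A Bb], .single _, by simp [Formula.IsPrime]⟩

theorem primeFactor_conjL {Q E1 E2 : Formula} (h : PrimeFactor Q E1) :
    PrimeFactor Q (Formula.conj E1 E2) := by
  obtain ⟨l, hc, hall, hm⟩ := h
  obtain ⟨m, hcm, hallm⟩ := exists_prime_decomp E2
  refine ⟨l ++ m, .conj hc hcm, ?_, List.mem_append.mpr (Or.inl hm)⟩
  intro R hR; rcases List.mem_append.mp hR with h | h
  exacts [hall R h, hallm R h]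

theorem primeFactor_conjR {Q E1 E2 : Formula} (h : PrimeFactor Q E2) :
    PrimeFactor Q (Formula.conj E1 E2) := by
  obtain ⟨l, hc, hall, hm⟩ := h
  obtain ⟨m, hcm, hallm⟩ := exists_prime_decomp E1
  refine ⟨m ++ l, .conj hcm hc, ?_, List.mem_append.mpr (Or.inr hm)⟩
  intro R hR; rcases List.mem_append.mp hR with h | h
  exacts [hallm R h, hall R h]

theorem primeFactor_of_sub {P E : Formula} (hp : P.IsPrime)
    (hs : Subformula P E) : ∃ Q, PrimeFactor Q E ∧ Subformula P Q := by
  induction E with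
  | conj E1 E2 ih1 ih2 =>
    have hne : P ≠ Formula.conj E1 E2 := by
      rintro rfl; exact hp
    have : Subformula P E1 ∨ Subformula P E2 := by
      cases hs with
      | refl => exact absurd rfl hne
      | conjL h => exact Or.inl h
      | conjR h => exact Or.inr h
    rcases this with h | h
    · obtain ⟨Q, ⟨l, hc, hall, hm⟩, hsub⟩ := ih1 h
      exact ⟨Q, primeFactor_conjL ⟨l, hc, hall, hm⟩, hsub⟩
    · obtain ⟨Q, hQ, hsub⟩ := ih2 h
      exact ⟨Q, primeFactor_conjR hQ, hsub⟩
  | atom n => exact ⟨.atom n, ⟨[.atom n], .single _, by simp [Formula.IsPrime], by simp⟩, hs⟩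
  | bot => exact ⟨.bot, ⟨[.bot], .single _, by simp [Formula.IsPrime], by simp⟩, hs⟩
  | imp A Bb _ _ => exact ⟨.imp A Bb, ⟨[.imp A Bb], .single _, by simp [Formula.IsPrime], by simp⟩, hs⟩

/-- a strong subformula of C → D is a proper subformula of a
prime factor of C or of a prime factor of D. -/
theorem strongSub_of_imp (B C D : Formula)
    (h : StrongSub B (Formula.imp C D)) :
    ∃ P, (PrimeFactor P C ∨ PrimeFactor P D) ∧ ProperSub B P := by
  obtain ⟨P, hp, ⟨hsub, hne⟩, hBP, hBne⟩ := h
  have hPC : Subformula P C ∨ Subformula P D := by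
    cases hsub with
    | refl => exact absurd rfl hne
    | impL h => exact Or.inl h
    | impR h => exact Or.inr h
  have hBlt : B.size < P.size := by
    rcases Subformula.size_lt hBP with rfl | h
    · exact absurd rfl hBne
    · exact h
  rcases hPC with h | h <;>
    obtain ⟨Q, hQ, hPQ⟩ := primeFactor_of_sub hp h <;>
    refine ⟨Q, by tauto, Subformula.trans hBP hPQ, ?_⟩ <;>
    · rintro rfl
      rcases Subformula.size_lt hPQ with rfl | hlt
      · exact absurd rfl hBne
      · omega
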